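/- Let x, y ∈ ℝ³ with x ≠ y, let L > 0, and let M₁, M₂ be real 3×3 matrices such that M₁ + M₂ is invertible. Set C = ‖y − x‖ − L, u = (y − x)/‖y − x‖, Δx = M₂ (M₁ + M₂)⁻¹ (C u) and Δy = − M₁ (M₁ + M₂)⁻¹ (C u). Then the corrected edge (y + Δy) − (x + Δx) is nonzero, and the orientation change Ω_Δ = ( (y − x)/‖y − x‖ ) × ( ((y + Δy) − (x + Δx)) / ‖(y + Δy) − (x + Δx)‖ ) equals the zero vector, where × is the cross product on ℝ³. -/

import Mathlib

/-! The two corrections add up to the full constraint step: `Δx - Δy = (M₁ + M₂)(M₁ + M₂)⁻¹ (C u) = C u`.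
Hence the corrected edge is `(y - x) - C u = (L / ‖y - x‖) (y - x)`, a positive multiple of the
original edge, and the cross product of two parallel vectors vanishes. -/

noncomputable def cross3 (a b : EuclideanSpace ℝ (Fin 3)) : EuclideanSpace ℝ (Fin 3) :=
  (WithLp.equiv 2 (Fin 3 → ℝ)).symm
    (crossProduct ((WithLp.equiv 2 (Fin 3 → ℝ)) a) ((WithLp.equiv 2 (Fin 3 → ℝ)) b))

theorem cross3_smul_smul_self (a b : ℝ) (v : EuclideanSpace ℝ (Fin 3)) :
    cross3 (a • v) (b • v) = 0 := by
  simp only [cross3, WithLp.equiv_apply, WithLp.ofLp_smul, LinearMap.map_smul,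
    LinearMap.smul_apply, cross_self, smul_zero, WithLp.equiv_symm_apply, WithLp.toLp_zero]

theorem Matrix.toEuclideanLin_mul_inv_add_toEuclideanLin_mul_inv {𝕜 n : Type*} [RCLike 𝕜]
    [Fintype n] [DecidableEq n] (A B : Matrix n n 𝕜) (h : IsUnit (A + B))
    (v : EuclideanSpace 𝕜 n) :
    toEuclideanLin (A * (A + B)⁻¹) v + toEuclideanLin (B * (A + B)⁻¹) v = v := by
  rw [← LinearMap.add_apply, ← map_add, ← add_mul,
    mul_nonsing_inv _ ((isUnit_iff_isUnit_det _).mp h)]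
  simp

theorem self_sub_smul_inv_norm_smul {E : Type*} [NormedAddCommGroup E] [NormedSpace ℝ E]
    (d : E) (L : ℝ) : d - (‖d‖ - L) • ‖d‖⁻¹ • d = (L * ‖d‖⁻¹) • d := by
  rcases eq_or_ne d 0 with rfl | hd
  · simp
  · have hd_norm : ‖d‖ ≠ 0 := norm_ne_zero_iff.mpr hd
    conv_lhs => enter [1]; rw [← one_smul ℝ d]
    rw [smul_smul, ← sub_smul]
    congr 1
    field_simp
    ring

/-- For vertices `x ≠ y` in ℝ³, undeformed length `L > 0`, and mass
matrices `M₁, M₂` with `M₁ + M₂` invertible, the DEFT inextensibility corrections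
`Δx = M₂ (M₁+M₂)⁻¹ (C u)` and `Δy = −M₁ (M₁+M₂)⁻¹ (C u)` (with `C = ‖y − x‖ − L` and
`u = (y − x)/‖y − x‖`) yield a nonzero corrected edge `(y + Δy) − (x + Δx)`, and the
orientation change `Ω_Δ = unit(y − x) × unit((y + Δy) − (x + Δx))` is the zero vector. -/
theorem inextensibility_correction_zero_orientation_change
    (x y : EuclideanSpace ℝ (Fin 3)) (hxy : x ≠ y) (L : ℝ) (hL : 0 < L)
    (M₁ M₂ : Matrix (Fin 3) (Fin 3) ℝ) (hM : IsUnit (M₁ + M₂)) :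
    let C : ℝ := ‖y - x‖ - L
    let u : EuclideanSpace ℝ (Fin 3) := ‖y - x‖⁻¹ • (y - x)
    let Δx : EuclideanSpace ℝ (Fin 3) :=
      Matrix.toEuclideanLin (M₂ * (M₁ + M₂)⁻¹) (C • u)
    let Δy : EuclideanSpace ℝ (Fin 3) :=
      -Matrix.toEuclideanLin (M₁ * (M₁ + M₂)⁻¹) (C • u)
    let e : EuclideanSpace ℝ (Fin 3) := (y + Δy) - (x + Δx)
    e ≠ 0 ∧ cross3 u (‖e‖⁻¹ • e) = 0 := by
  intro C u Δx Δy e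
  have hd : y - x ≠ 0 := sub_ne_zero.mpr hxy.symm
  have he : e = (L * ‖y - x‖⁻¹) • (y - x) :=
    calc e = (y - x) - (Matrix.toEuclideanLin (M₁ * (M₁ + M₂)⁻¹) (C • u)
          + Matrix.toEuclideanLin (M₂ * (M₁ + M₂)⁻¹) (C • u)) := by
          simp only [e, Δx, Δy]; abel
      _ = (y - x) - C • u := by
          rw [Matrix.toEuclideanLin_mul_inv_add_toEuclideanLin_mul_inv _ _ hM]
      _ = (L * ‖y - x‖⁻¹) • (y - x) := self_sub_smul_inv_norm_smul _ _
  refine ⟨he ▸ smul_ne_zero (by positivity) hd, ?_⟩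
  rw [he, smul_smul]
  exact cross3_smul_smul_self _ _ _
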